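/- Reductive subtyping is transitive: for all MiniJl types τ1, τ2, τ3, if τ1 ≤r τ2 and τ2 ≤r τ3, then τ1 ≤r τ3. -/
import Mathlib


/-- MiniJl types -/
inductive Ty : Type
  | pair : Ty → Ty → Ty
  | union : Ty → Ty → Ty
  | int : Ty
  | flt : Ty
  | cmplx : Ty
  | str : Ty
  | real : Ty
  | num : Ty
deriving DecidableEq

/-- Value types: concrete nominal types and pairs of value types. -/
inductive ValTy : Ty → Prop
  | int : ValTy .int
  | flt : ValTy .flt
  | cmplx : ValTy .cmplx
  | str : ValTy .str
  | pair {v1 v2 : Ty} : ValTy v1 → ValTy v2 → ValTy (.pair v1 v2)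

/-- Matching relation `v ⋖ τ`. -/
inductive Matches : Ty → Ty → Prop
  | int : Matches .int .int
  | flt : Matches .flt .flt
  | cmplx : Matches .cmplx .cmplx
  | str : Matches .str .str
  | intReal : Matches .int .real
  | fltReal : Matches .flt .real
  | intNum : Matches .int .num
  | fltNum : Matches .flt .num
  | cmplxNum : Matches .cmplx .num
  | pair {v1 v2 t1 t2 : Ty} : Matches v1 t1 → Matches v2 t2 →
      Matches (.pair v1 v2) (.pair t1 t2)
  | unionL {v t1 t2 : Ty} : Matches v t1 → Matches v (.union t1 t2)
  | unionR {v t1 t2 : Ty} : Matches v t2 → Matches v (.union t1 t2)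

/-- Matching-based semantic subtyping. -/
def SemSub (t1 t2 : Ty) : Prop :=
  ∀ v : Ty, ValTy v → Matches v t1 → Matches v t2

/-- Tag interpretation of types as sets of value types. -/
def interp : Ty → Set Ty
  | .int => {.int}
  | .flt => {.flt}
  | .cmplx => {.cmplx}
  | .str => {.str}
  | .real => {.int, .flt}
  | .num => {.int, .flt, .cmplx}
  | .pair t1 t2 => {v | ∃ v1 ∈ interp t1, ∃ v2 ∈ interp t2, v = .pair v1 v2}
  | .union t1 t2 => interp t1 ∪ interp t2

/-- Declarative subtyping. -/
inductive DeclSub : Ty → Ty → Prop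
  | refl (t : Ty) : DeclSub t t
  | trans {t1 t2 t3 : Ty} : DeclSub t1 t2 → DeclSub t2 t3 → DeclSub t1 t3
  | intReal : DeclSub .int .real
  | fltReal : DeclSub .flt .real
  | realNum : DeclSub .real .num
  | cmplxNum : DeclSub .cmplx .num
  | realUnion : DeclSub .real (.union .int .flt)
  | numUnion : DeclSub .num (.union .real .cmplx)
  | pair {t1 t2 t1' t2' : Ty} : DeclSub t1 t1' → DeclSub t2 t2' →
      DeclSub (.pair t1 t2) (.pair t1' t2')
  | unionL {t1 t2 t' : Ty} : DeclSub t1 t' → DeclSub t2 t' →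
      DeclSub (.union t1 t2) t'
  | unionR1 (t1 t2 : Ty) : DeclSub t1 (.union t1 t2)
  | unionR2 (t1 t2 : Ty) : DeclSub t2 (.union t1 t2)
  | distr1 (t11 t12 t2 : Ty) :
      DeclSub (.pair (.union t11 t12) t2)
        (.union (.pair t11 t2) (.pair t12 t2))
  | distr2 (t1 t21 t22 : Ty) :
      DeclSub (.pair t1 (.union t21 t22))
        (.union (.pair t1 t21) (.pair t1 t22))

/-- Normal form predicate. -/
inductive InNF : Ty → Prop
  | val {v : Ty} : ValTy v → InNF v
  | union {t1 t2 : Ty} : InNF t1 → InNF t2 → InNF (.union t1 t2)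

/-- Union of pairs -/
def unprs : Ty → Ty → Ty
  | .union t11 t12, t2 => .union (unprs t11 t2) (unprs t12 t2)
  | t1, .union t21 t22 => .union (unprs t1 t21) (unprs t1 t22)
  | t1, t2 => .pair t1 t2

/-- Normalization function. -/
def NF : Ty → Ty
  | .int => .int
  | .flt => .flt
  | .cmplx => .cmplx
  | .str => .str
  | .real => .union .int .flt
  | .num => .union (.union .int .flt) .cmplx
  | .pair t1 t2 => unprs (NF t1) (NF t2)
  | .union t1 t2 => .union (NF t1) (NF t2)

/-- Reductive subtyping. -/
inductive RedSub : Ty → Ty → Prop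
  | intRefl : RedSub .int .int
  | fltRefl : RedSub .flt .flt
  | cmplxRefl : RedSub .cmplx .cmplx
  | strRefl : RedSub .str .str
  | intReal : RedSub .int .real
  | fltReal : RedSub .flt .real
  | cmplxNum : RedSub .cmplx .num
  | intNum : RedSub .int .num
  | fltNum : RedSub .flt .num
  | pair {t1 t2 t1' t2' : Ty} : RedSub t1 t1' → RedSub t2 t2' →
      RedSub (.pair t1 t2) (.pair t1' t2')
  | unionL {t1 t2 t' : Ty} : RedSub t1 t' → RedSub t2 t' →
      RedSub (.union t1 t2) t'
  | unionR1 {t t1' t2' : Ty} : RedSub t t1' → RedSub t (.union t1' t2')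
  | unionR2 {t t1' t2' : Ty} : RedSub t t2' → RedSub t (.union t1' t2')
  | nf {t t' : Ty} : RedSub (NF t) t' → RedSub t t'


lemma matches_self {v : Ty} (h : ValTy v) : Matches v v := by
  induction h with
  | int => exact .int
  | flt => exact .flt
  | cmplx => exact .cmplx
  | str => exact .str
  | pair _ _ ih1 ih2 => exact .pair ih1 ih2

lemma matches_redSub {v t : Ty} (h : Matches v t) : RedSub v t := by
  induction h with
  | int => exact .intRefl
  | flt => exact .fltRefl
  | cmplx => exact .cmplxRefl
  | str => exact .strRefl
  | intReal => exact .intReal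
  | fltReal => exact .fltReal
  | intNum => exact .intNum
  | fltNum => exact .fltNum
  | cmplxNum => exact .cmplxNum
  | pair _ _ ih1 ih2 => exact .pair ih1 ih2
  | unionL _ ih => exact .unionR1 ih
  | unionR _ ih => exact .unionR2 ih

lemma matches_unprs_intro {a b v1 v2 : Ty} (h1 : Matches v1 a) (h2 : Matches v2 b) :
    Matches (.pair v1 v2) (unprs a b) := by
  induction a, b using unprs.induct with
  | case1 a1 a2 b ih1 ih2 =>
    rw [unprs.eq_1]
    cases h1 with
    | unionL h => exact .unionL (ih1 h h2)
    | unionR h => exact .unionR (ih2 h h2)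
  | case2 a b1 b2 hne ih1 ih2 =>
    rw [unprs.eq_2 _ _ _ hne]
    cases h2 with
    | unionL h => exact .unionL (ih1 h1 h)
    | unionR h => exact .unionR (ih2 h1 h)
  | case3 a b hne1 hne2 =>
    rw [unprs.eq_3 _ _ hne1 hne2]
    exact .pair h1 h2

lemma matches_unprs_elim {a b v : Ty} (h : Matches v (unprs a b)) :
    ∃ v1 v2, v = .pair v1 v2 ∧ Matches v1 a ∧ Matches v2 b := by
  induction a, b using unprs.induct with
  | case1 a1 a2 b ih1 ih2 =>
    rw [unprs.eq_1] at h
    cases h with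
    | unionL h =>
      obtain ⟨v1, v2, rfl, m1, m2⟩ := ih1 h
      exact ⟨v1, v2, rfl, .unionL m1, m2⟩
    | unionR h =>
      obtain ⟨v1, v2, rfl, m1, m2⟩ := ih2 h
      exact ⟨v1, v2, rfl, .unionR m1, m2⟩
  | case2 a b1 b2 hne ih1 ih2 =>
    rw [unprs.eq_2 _ _ _ hne] at h
    cases h with
    | unionL h =>
      obtain ⟨v1, v2, rfl, m1, m2⟩ := ih1 h
      exact ⟨v1, v2, rfl, m1, .unionL m2⟩
    | unionR h =>
      obtain ⟨v1, v2, rfl, m1, m2⟩ := ih2 h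
      exact ⟨v1, v2, rfl, m1, .unionR m2⟩
  | case3 a b hne1 hne2 =>
    rw [unprs.eq_3 _ _ hne1 hne2] at h
    cases h with
    | pair m1 m2 => exact ⟨_, _, rfl, m1, m2⟩

lemma matches_nf {v t : Ty} : Matches v (NF t) ↔ Matches v t := by
  induction t generalizing v with
  | int => exact Iff.rfl
  | flt => exact Iff.rfl
  | cmplx => exact Iff.rfl
  | str => exact Iff.rfl
  | real =>
    constructor
    · intro h
      cases h with
      | unionL h => cases h; exact .intReal
      | unionR h => cases h; exact .fltReal
    · intro h
      cases h with
      | intReal => exact .unionL .int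
      | fltReal => exact .unionR .flt
  | num =>
    constructor
    · intro h
      cases h with
      | unionL h =>
        cases h with
        | unionL h => cases h; exact .intNum
        | unionR h => cases h; exact .fltNum
      | unionR h => cases h; exact .cmplxNum
    · intro h
      cases h with
      | intNum => exact .unionL (.unionL .int)
      | fltNum => exact .unionL (.unionR .flt)
      | cmplxNum => exact .unionR .cmplx
  | pair t1 t2 ih1 ih2 =>
    constructor
    · intro h
      obtain ⟨v1, v2, rfl, m1, m2⟩ := matches_unprs_elim h
      exact .pair (ih1.mp m1) (ih2.mp m2)
    · intro h
      cases h with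
      | pair m1 m2 => exact matches_unprs_intro (ih1.mpr m1) (ih2.mpr m2)
  | union t1 t2 ih1 ih2 =>
    constructor
    · intro h
      cases h with
      | unionL h => exact .unionL (ih1.mp h)
      | unionR h => exact .unionR (ih2.mp h)
    · intro h
      cases h with
      | unionL h => exact .unionL (ih1.mpr h)
      | unionR h => exact .unionR (ih2.mpr h)

lemma redSub_sound {t t' : Ty} (h : RedSub t t') : ∀ v, Matches v t → Matches v t' := by
  induction h with
  | intRefl => exact fun v m => m
  | fltRefl => exact fun v m => m
  | cmplxRefl => exact fun v m => m
  | strRefl => exact fun v m => m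
  | intReal => intro v m; cases m; exact .intReal
  | fltReal => intro v m; cases m; exact .fltReal
  | cmplxNum => intro v m; cases m; exact .cmplxNum
  | intNum => intro v m; cases m; exact .intNum
  | fltNum => intro v m; cases m; exact .fltNum
  | pair _ _ ih1 ih2 =>
    intro v m
    cases m with
    | pair m1 m2 => exact .pair (ih1 _ m1) (ih2 _ m2)
  | unionL _ _ ih1 ih2 =>
    intro v m
    cases m with
    | unionL m => exact ih1 _ m
    | unionR m => exact ih2 _ m
  | unionR1 _ ih => exact fun v m => .unionL (ih _ m)
  | unionR2 _ ih => exact fun v m => .unionR (ih _ m)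
  | nf _ ih => exact fun v m => ih _ (matches_nf.mpr m)

lemma unprs_inNF {a b : Ty} (ha : InNF a) (hb : InNF b) : InNF (unprs a b) := by
  induction a, b using unprs.induct with
  | case1 a1 a2 b ih1 ih2 =>
    rw [unprs.eq_1]
    cases ha with
    | union h1 h2 => exact .union (ih1 h1 hb) (ih2 h2 hb)
    | val h => cases h
  | case2 a b1 b2 hne ih1 ih2 =>
    rw [unprs.eq_2 _ _ _ hne]
    cases hb with
    | union h1 h2 => exact .union (ih1 ha h1) (ih2 ha h2)
    | val h => cases h
  | case3 a b hne1 hne2 =>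
    rw [unprs.eq_3 _ _ hne1 hne2]
    cases ha with
    | union h1 h2 => exact absurd rfl (hne1 _ _)
    | val hva =>
      cases hb with
      | union h1 h2 => exact absurd rfl (hne2 _ _)
      | val hvb => exact .val (.pair hva hvb)

lemma nf_inNF (t : Ty) : InNF (NF t) := by
  induction t with
  | int => exact .val .int
  | flt => exact .val .flt
  | cmplx => exact .val .cmplx
  | str => exact .val .str
  | real => exact .union (.val .int) (.val .flt)
  | num => exact .union (.union (.val .int) (.val .flt)) (.val .cmplx)
  | pair t1 t2 ih1 ih2 => exact unprs_inNF ih1 ih2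
  | union t1 t2 ih1 ih2 => exact .union ih1 ih2

lemma redSub_complete_nf {t t' : Ty} (ht : InNF t)
    (h : ∀ v, Matches v t → Matches v t') : RedSub t t' := by
  induction ht with
  | val hv => exact matches_redSub (h _ (matches_self hv))
  | union _ _ ih1 ih2 =>
    exact .unionL (ih1 fun v m => h v (.unionL m)) (ih2 fun v m => h v (.unionR m))

theorem redSub_trans (t1 t2 t3 : Ty) (h12 : RedSub t1 t2) (h23 : RedSub t2 t3) :
    RedSub t1 t3 := by
  have s12 := redSub_sound h12
  have s23 := redSub_sound h23
  exact .nf (redSub_complete_nf (nf_inNF t1) fun v m => s23 v (s12 v (matches_nf.mp m)))
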